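/- Let D be a connected acyclic digraph of order n. Then for every k with 1 ≤ k ≤ n, the number of connected convex sets of D of size exactly k is at least n − k + 1. -/

import Mathlib

/-!
Digraphs are given by an arc relation `A : V → V → Prop` on a vertex type `V`.
A directed path from `a` to `b` is encoded as `a :: (l ++ [b])` where the list
satisfies `List.Chain A` (consecutive arcs) and `List.Nodup` (distinct vertices);
`l` is the list of internal vertices.
-/

variable {V : Type*}

/-- A non-empty vertex set `X` is convex if no directed path between two
vertices of `X` contains a vertex not in `X`. -/
def ConvexIn (A : V → V → Prop) (X : Set V) : Prop :=
  X.Nonempty ∧ ∀ a b : V, ∀ l : List V, a ∈ X → b ∈ X →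
    List.Chain A a (l ++ [b]) → (a :: (l ++ [b])).Nodup → ∀ w ∈ l, w ∈ X

/-- A vertex set is connected if the underlying undirected graph induced on it
is connected. -/
def ConnectedIn (A : V → V → Prop) (X : Set V) : Prop :=
  ((SimpleGraph.fromRel A).induce X).Connected

/-- A digraph is acyclic if it has no directed cycle, equivalently no
nontrivial directed closed walk. -/
def AcyclicDigraph (A : V → V → Prop) : Prop :=
  ∀ v, ¬ Relation.TransGen A v v

/-- A digraph is connected if its underlying undirected graph is connected. -/
def DigraphConnected (A : V → V → Prop) : Prop :=
  (SimpleGraph.fromRel A).Connected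

/-- A source is a vertex with in-degree zero. -/
def IsSourceIn (A : V → V → Prop) (v : V) : Prop := ∀ u, ¬ A u v

/-- A sink is a vertex with out-degree zero. -/
def IsSinkIn (A : V → V → Prop) (v : V) : Prop := ∀ u, ¬ A v u

/-- A cut-vertex of a connected digraph: deleting it disconnects the
underlying undirected graph. -/
def IsCutVertexIn (A : V → V → Prop) (v : V) : Prop :=
  ¬ ((SimpleGraph.fromRel A).induce {u | u ≠ v}).Connected

/-!
In a finite acyclic digraph every nonempty vertex set has a source and a sink. Call `w` removable
from a connected set `S` if it is a source or sink of `S` and `S \ {w}` is still connected; deleting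
a removable vertex also preserves convexity, since a source or sink of `S` is never an interior
vertex of a directed path inside `S`.

If `v` is a source or sink of `S`, each component `C` of `S \ {v}` contains a source or sink `w`
of `S` (a sink of `C` if `v` is a source, and vice versa). If `w` is not removable, some component
of `S \ {w}` misses `v`, and it lies strictly inside `C`; descending, we find a removable vertex
in `C`. Applying this twice, every connected `S` with `|S| ≥ 2` has a removable vertex other than
any given `z`. Deleting such vertices from `S` down to size `k` gives a connected convex `k`-set
through any prescribed vertex, and induction on `|S|` gives the count: the `(|S| - 1) - k + 1`
sets inside `S \ {w}` for a removable `w`, plus one set through `w`.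
-/

open Relation

theorem List.IsChain.exists_rel_of_mem_interior {α : Type*} {R : α → α → Prop} {a b w : α} :
    ∀ {l : List α}, (a :: (l ++ [b])).IsChain R → w ∈ l →
      ∃ p ∈ a :: l, ∃ q ∈ l ++ [b], R p w ∧ R w q
  | [], _, hw => absurd hw List.not_mem_nil
  | x :: t, h, hw => by
    rw [List.cons_append, List.isChain_cons_cons] at h
    obtain rfl | hwt := List.mem_cons.mp hw
    · obtain ⟨q, hq⟩ : ∃ q, (t ++ [b]).head? = some q := by cases t <;> simp
      exact ⟨a, by simp, q, by simp [List.mem_of_mem_head? hq], h.1, h.2.rel_head? hq⟩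
    · obtain ⟨p, hp, q, hq, hpw, hwq⟩ := h.2.exists_rel_of_mem_interior hwt
      exact ⟨p, by simp_all, q, by simp_all, hpw, hwq⟩

variable {A : V → V → Prop}

namespace AcyclicDigraph

theorem flip (hacyc : AcyclicDigraph A) : AcyclicDigraph (flip A) :=
  fun v h => hacyc v (TransGen.swap _ _ h)

variable [Finite V]

theorem exists_source (hacyc : AcyclicDigraph A) {T : Set V} (hT : T.Nonempty) :
    ∃ v ∈ T, ∀ u ∈ T, ¬ A u v := by
  have : IsStrictOrder V (TransGen A) := { trans := fun _ _ _ => TransGen.trans, irrefl := hacyc }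
  obtain ⟨v, hv, hmin⟩ := (Finite.wellFounded_of_trans_of_irrefl (TransGen A)).has_min T hT
  exact ⟨v, hv, fun u hu huv => hmin u hu (.single huv)⟩

theorem exists_sink (hacyc : AcyclicDigraph A) {T : Set V} (hT : T.Nonempty) :
    ∃ v ∈ T, ∀ u ∈ T, ¬ A v u :=
  hacyc.flip.exists_source hT

end AcyclicDigraph

/-- Adjacency in the underlying undirected graph of the subdigraph induced on `T`. -/
def AdjIn (A : V → V → Prop) (T : Set V) (u v : V) : Prop :=
  u ∈ T ∧ v ∈ T ∧ (A u v ∨ A v u)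

def ComponentIn (A : V → V → Prop) (T : Set V) (a : V) : Set V :=
  {x | x ∈ T ∧ ReflTransGen (AdjIn A T) a x}

section Components

variable {T T' : Set V} {a x y : V}

theorem AdjIn.symm (h : AdjIn A T x y) : AdjIn A T y x := ⟨h.2.1, h.1, h.2.2.symm⟩

theorem AdjIn.mono (hT : T ⊆ T') (h : AdjIn A T x y) : AdjIn A T' x y :=
  ⟨hT h.1, hT h.2.1, h.2.2⟩

instance : Std.Symm (AdjIn A T) := ⟨fun _ _ => AdjIn.symm⟩

theorem reflTransGen_adjIn_symm (h : ReflTransGen (AdjIn A T) x y) :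
    ReflTransGen (AdjIn A T) y x :=
  Std.Symm.symm _ _ h

theorem reflTransGen_adjIn_mono (hT : T ⊆ T') (h : ReflTransGen (AdjIn A T) x y) :
    ReflTransGen (AdjIn A T') x y :=
  ReflTransGen.mono (fun _ _ => AdjIn.mono hT) _ _ h

theorem mem_componentIn_self (ha : a ∈ T) : a ∈ ComponentIn A T a := ⟨ha, .refl⟩

theorem componentIn_eq (hx : x ∈ ComponentIn A T a) : ComponentIn A T x = ComponentIn A T a :=
  Set.ext fun _ => and_congr_right fun _ =>
    ⟨hx.2.trans, (reflTransGen_adjIn_symm hx.2).trans⟩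

theorem mem_componentIn_of_adjIn (hx : x ∈ ComponentIn A T a) (hxy : AdjIn A T x y) :
    y ∈ ComponentIn A T a :=
  ⟨hxy.2.1, hx.2.tail hxy⟩

end Components

theorem connectedIn_iff {X : Set V} :
    ConnectedIn A X ↔ X.Nonempty ∧ ∀ a ∈ X, ∀ b ∈ X, ReflTransGen (AdjIn A X) a b := by
  set G := (SimpleGraph.fromRel A).induce X
  have adj_iff (u v : X) : G.Adj u v ↔ u ≠ v ∧ AdjIn A X u v := by
    simp [G, AdjIn, Subtype.ext_iff]
  have reachable_of_adjIn (u v : X) (h : AdjIn A X u v) : G.Reachable u v := by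
    by_cases huv : u = v
    · rw [huv]
    · exact ((adj_iff u v).2 ⟨huv, h⟩).reachable
  rw [ConnectedIn, SimpleGraph.connected_iff, Set.nonempty_coe_sort, and_comm]
  refine and_congr_right fun _ => ⟨fun h a ha b hb => ?_, fun h ⟨a, ha⟩ ⟨b, hb⟩ => ?_⟩
  · exact ReflTransGen.lift Subtype.val (fun u v huv => ((adj_iff u v).1 huv).2) _ _
      ((SimpleGraph.reachable_iff_reflTransGen _ _).1 (h ⟨a, ha⟩ ⟨b, hb⟩))
  · suffices ∀ c, ReflTransGen (AdjIn A X) a c → ∀ hc : c ∈ X, G.Reachable ⟨a, ha⟩ ⟨c, hc⟩ from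
      this b (h a ha b hb) hb
    intro c hac
    induction hac with
    | refl => exact fun _ => .rfl
    | tail _ hcd ih => exact fun hd => (ih hcd.1).trans (reachable_of_adjIn _ ⟨_, hd⟩ hcd)

theorem connectedIn_univ : ConnectedIn A Set.univ ↔ DigraphConnected A :=
  (SimpleGraph.induceUnivIso _).connected_iff

theorem ConnectedIn.nonempty {X : Set V} (h : ConnectedIn A X) : X.Nonempty :=
  (connectedIn_iff.1 h).1

theorem ConnectedIn.reflTransGen {X : Set V} (h : ConnectedIn A X) {a b : V} (ha : a ∈ X)
    (hb : b ∈ X) : ReflTransGen (AdjIn A X) a b :=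
  (connectedIn_iff.1 h).2 a ha b hb

theorem exists_not_reflTransGen_of_not_connectedIn {X : Set V} (hne : X.Nonempty)
    (h : ¬ ConnectedIn A X) : ∃ p ∈ X, ∃ q ∈ X, ¬ ReflTransGen (AdjIn A X) p q := by
  simpa [connectedIn_iff, hne] using h

def IsSourceOrSinkIn (A : V → V → Prop) (S : Set V) (w : V) : Prop :=
  w ∈ S ∧ ((∀ u ∈ S, ¬ A u w) ∨ (∀ u ∈ S, ¬ A w u))

theorem ConvexIn.diff_singleton {S : Set V} {w : V} (hS : ConvexIn A S)
    (hw : IsSourceOrSinkIn A S w) (hne : (S \ {w}).Nonempty) : ConvexIn A (S \ {w}) := by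
  refine ⟨hne, fun a b l ha hb hch hnd x hx => ⟨hS.2 a b l ha.1 hb.1 hch hnd x hx, ?_⟩⟩
  rintro rfl
  have hl : ∀ y ∈ l, y ∈ S := hS.2 a b l ha.1 hb.1 hch hnd
  obtain ⟨p, hp, q, hq, hpx, hxq⟩ := List.IsChain.exists_rel_of_mem_interior hch hx
  rcases hw.2 with hsrc | hsnk
  · exact hsrc p (List.forall_mem_cons.2 ⟨ha.1, hl⟩ p hp) hpx
  · exact hsnk q (List.forall_mem_append.2 ⟨hl, by simpa using hb.1⟩ q hq) hxq

theorem convexIn_univ [Nonempty V] : ConvexIn A Set.univ :=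
  ⟨Set.univ_nonempty, fun _ _ _ _ _ _ _ _ _ => trivial⟩

theorem AcyclicDigraph.exists_sourceOrSink_mem_componentIn [Finite V] (hacyc : AcyclicDigraph A)
    {S : Set V} {v a : V} (hv : IsSourceOrSinkIn A S v) (ha : a ∈ S \ {v}) :
    ∃ w ∈ ComponentIn A (S \ {v}) a, IsSourceOrSinkIn A S w := by
  have hC : (ComponentIn A (S \ {v}) a).Nonempty := ⟨a, mem_componentIn_self ha⟩
  have hout {w u : V} (hw : w ∈ ComponentIn A (S \ {v}) a) (hu : u ∈ S) (hne : u ≠ v)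
      (harc : A u w ∨ A w u) : u ∈ ComponentIn A (S \ {v}) a :=
    mem_componentIn_of_adjIn hw ⟨hw.1, ⟨hu, hne⟩, harc.symm⟩
  rcases hv.2 with hsrc | hsnk
  · obtain ⟨w, hw, hwsnk⟩ := hacyc.exists_sink hC
    refine ⟨w, hw, hw.1.1, .inr fun u hu hwu => ?_⟩
    obtain rfl | hne := eq_or_ne u v
    · exact hsrc w hw.1.1 hwu
    · exact hwsnk u (hout hw hu hne (.inr hwu)) hwu
  · obtain ⟨w, hw, hwsrc⟩ := hacyc.exists_source hC
    refine ⟨w, hw, hw.1.1, .inl fun u hu huw => ?_⟩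
    obtain rfl | hne := eq_or_ne u v
    · exact hsnk w hw.1.1 huw
    · exact hwsrc u (hout hw hu hne (.inl huw)) huw

theorem reflTransGen_adjIn_componentIn_union {S : Set V} {u v : V}
    (h : ReflTransGen (AdjIn A S) u v) :
    ReflTransGen (AdjIn A (ComponentIn A (S \ {v}) u ∪ {v})) u v := by
  induction h using ReflTransGen.head_induction_on with
  | refl => rfl
  | @head u y huy _ ih =>
    by_cases huv : u = v
    · rw [huv]
    have hu : u ∈ ComponentIn A (S \ {v}) u := mem_componentIn_self ⟨huy.1, huv⟩
    by_cases hyv : y = v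
    · subst hyv
      exact .single ⟨.inl hu, .inr rfl, huy.2.2⟩
    · have hy := mem_componentIn_of_adjIn hu ⟨hu.1, ⟨huy.2.1, hyv⟩, huy.2.2⟩
      rw [componentIn_eq hy] at ih
      exact ih.head ⟨.inl hu, .inl hy, huy.2.2⟩

theorem exists_componentIn_ssubset_of_not_connectedIn {S : Set V} {v a w : V}
    (hS : ConnectedIn A S) (hv : v ∈ S) (hw : w ∈ ComponentIn A (S \ {v}) a)
    (hSw : ¬ ConnectedIn A (S \ {w})) :
    ∃ c ∈ S \ {w}, ComponentIn A (S \ {w}) c ⊂ ComponentIn A (S \ {v}) a := by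
  have hvw : v ∈ S \ {w} := ⟨hv, fun h => hw.1.2 h.symm⟩
  obtain ⟨p, hp, q, hq, hpq⟩ := exists_not_reflTransGen_of_not_connectedIn ⟨v, hvw⟩ hSw
  obtain ⟨c, hc, hvc⟩ : ∃ c ∈ S \ {w}, v ∉ ComponentIn A (S \ {w}) c := by
    by_cases h : v ∈ ComponentIn A (S \ {w}) p
    · exact ⟨q, hq, fun h' => hpq (h.2.trans (reflTransGen_adjIn_symm h'.2))⟩
    · exact ⟨p, hp, h⟩
  refine ⟨c, hc, (Set.ssubset_iff_of_subset ?_).2 ⟨w, hw, fun h => h.1.2 rfl⟩⟩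
  intro x hx
  by_contra hxC
  have hxv : x ≠ v := fun h => hvc (h ▸ hx)
  -- as `x ∉ C`, its component of `S \ {v}` avoids `w`, and through it `x` reaches `v` in `S \ {w}`
  have hwx : w ∉ ComponentIn A (S \ {v}) x := by
    intro h
    have hx' : x ∈ ComponentIn A (S \ {v}) x := mem_componentIn_self ⟨hx.1.1, hxv⟩
    rw [← componentIn_eq h, componentIn_eq hw] at hx'
    exact hxC hx'
  have hsub : ComponentIn A (S \ {v}) x ∪ {v} ⊆ S \ {w} := by
    rintro y (hy | rfl)
    · exact ⟨hy.1.1, fun h => hwx (h ▸ hy)⟩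
    · exact hvw
  have hreach : ReflTransGen (AdjIn A (S \ {w})) x v := reflTransGen_adjIn_mono hsub
    (reflTransGen_adjIn_componentIn_union (hS.reflTransGen hx.1.1 hv))
  exact hvc (componentIn_eq hx ▸ ⟨hvw, hreach⟩)

def IsRemovableIn (A : V → V → Prop) (S : Set V) (w : V) : Prop :=
  IsSourceOrSinkIn A S w ∧ ConnectedIn A (S \ {w})

theorem AcyclicDigraph.exists_isRemovableIn_mem_componentIn [Finite V]
    (hacyc : AcyclicDigraph A) {S : Set V} (hS : ConnectedIn A S) {v a : V}
    (hv : IsSourceOrSinkIn A S v) (ha : a ∈ S \ {v}) :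
    ∃ w ∈ ComponentIn A (S \ {v}) a, IsRemovableIn A S w := by
  obtain ⟨w, hw, hws⟩ := hacyc.exists_sourceOrSink_mem_componentIn hv ha
  by_cases hSw : ConnectedIn A (S \ {w})
  · exact ⟨w, hw, hws, hSw⟩
  obtain ⟨c, hc, hlt⟩ := exists_componentIn_ssubset_of_not_connectedIn hS hv.1 hw hSw
  obtain ⟨w', hw', hw'r⟩ := hacyc.exists_isRemovableIn_mem_componentIn hS hws hc
  exact ⟨w', hlt.1 hw', hw'r⟩
termination_by (ComponentIn A (S \ {v}) a).ncard
decreasing_by exact Set.ncard_lt_ncard hlt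

theorem AcyclicDigraph.exists_isRemovableIn_ne [Finite V] (hacyc : AcyclicDigraph A)
    {S : Set V} (hS : ConnectedIn A S) (h2 : 2 ≤ S.ncard) (z : V) :
    ∃ w ≠ z, IsRemovableIn A S w := by
  have key {v : V} (hv : IsSourceOrSinkIn A S v) : ∃ w ≠ v, IsRemovableIn A S w := by
    obtain ⟨a, ha⟩ : (S \ {v}).Nonempty := by
      apply Set.nonempty_of_ncard_ne_zero
      rw [Set.ncard_sdiff_singleton_of_mem hv.1]
      omega
    obtain ⟨w, hw, hwr⟩ := hacyc.exists_isRemovableIn_mem_componentIn hS hv ha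
    exact ⟨w, hw.1.2, hwr⟩
  obtain ⟨v, hv, hvsrc⟩ := hacyc.exists_source hS.nonempty
  obtain ⟨w, -, hw⟩ := key ⟨hv, .inl hvsrc⟩
  by_cases hwz : w = z
  · subst hwz
    exact key hw.1
  · exact ⟨w, hwz, hw⟩

theorem IsRemovableIn.convexIn_diff {S : Set V} {w : V} (hw : IsRemovableIn A S w)
    (hS : ConvexIn A S) : ConvexIn A (S \ {w}) :=
  hS.diff_singleton hw.1 hw.2.nonempty

namespace AcyclicDigraph

variable [Finite V]

theorem exists_connectedIn_convexIn_mem (hacyc : AcyclicDigraph A) {S : Set V}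
    (hS : ConnectedIn A S) (hSc : ConvexIn A S) {k : ℕ} (hk : 1 ≤ k) (hkS : k ≤ S.ncard)
    {z : V} (hz : z ∈ S) :
    ∃ X ⊆ S, z ∈ X ∧ ConnectedIn A X ∧ ConvexIn A X ∧ X.ncard = k := by
  obtain hkS | hkS := hkS.eq_or_lt
  · exact ⟨S, subset_rfl, hz, hS, hSc, hkS.symm⟩
  obtain ⟨w, hwz, hw⟩ := hacyc.exists_isRemovableIn_ne hS (by omega) z
  have hcard : (S \ {w}).ncard + 1 = S.ncard := Set.ncard_sdiff_singleton_add_one hw.1.1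
  obtain ⟨X, hXS, hzX, hX⟩ := hacyc.exists_connectedIn_convexIn_mem hw.2 (hw.convexIn_diff hSc)
    hk (by omega) (z := z) ⟨hz, hwz.symm⟩
  exact ⟨X, hXS.trans Set.sdiff_subset, hzX, hX⟩
termination_by S.ncard

theorem le_ncard_connectedIn_convexIn (hacyc : AcyclicDigraph A) {S : Set V}
    (hS : ConnectedIn A S) (hSc : ConvexIn A S) {k : ℕ} (hk : 1 ≤ k) (hkS : k ≤ S.ncard) :
    S.ncard - k + 1 ≤ {X | X ⊆ S ∧ ConnectedIn A X ∧ ConvexIn A X ∧ X.ncard = k}.ncard := by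
  obtain hkS | hkS := hkS.eq_or_lt
  · have hmem : S ∈ {X | X ⊆ S ∧ ConnectedIn A X ∧ ConvexIn A X ∧ X.ncard = k} :=
      ⟨subset_rfl, hS, hSc, hkS.symm⟩
    have hpos := (Set.ncard_pos (Set.toFinite _)).2 ⟨S, hmem⟩
    omega
  obtain ⟨z, -⟩ := hS.nonempty
  obtain ⟨w, -, hw⟩ := hacyc.exists_isRemovableIn_ne hS (by omega) z
  have hcard : (S \ {w}).ncard + 1 = S.ncard := Set.ncard_sdiff_singleton_add_one hw.1.1
  have hIH := hacyc.le_ncard_connectedIn_convexIn hw.2 (hw.convexIn_diff hSc) hk (by omega)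
  -- every family member inside `S \ {w}` stays one in `S`, and one more member contains `w`
  obtain ⟨X₀, hX₀S, hwX₀, hX₀⟩ := hacyc.exists_connectedIn_convexIn_mem hS hSc hk hkS.le hw.1.1
  have hsub : insert X₀ {X | X ⊆ S \ {w} ∧ ConnectedIn A X ∧ ConvexIn A X ∧ X.ncard = k} ⊆
      {X | X ⊆ S ∧ ConnectedIn A X ∧ ConvexIn A X ∧ X.ncard = k} := by
    rintro X (rfl | ⟨hXS, hX⟩)
    exacts [⟨hX₀S, hX₀⟩, ⟨hXS.trans Set.sdiff_subset, hX⟩]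
  have hX₀new : X₀ ∉ {X | X ⊆ S \ {w} ∧ ConnectedIn A X ∧ ConvexIn A X ∧ X.ncard = k} :=
    fun h => (h.1 hwX₀).2 rfl
  have hle := Set.ncard_le_ncard hsub
  rw [Set.ncard_insert_of_notMem hX₀new] at hle
  omega
termination_by S.ncard

end AcyclicDigraph

/-- A connected acyclic digraph of order `n` has at least `n - k + 1` connected
convex sets of size `k`, for every `1 ≤ k ≤ n`. -/
theorem stmt_3 {V : Type*} [Fintype V] (A : V → V → Prop)
    (hconn : DigraphConnected A) (hacyc : AcyclicDigraph A)
    (k : ℕ) (hk1 : 1 ≤ k) (hkn : k ≤ Fintype.card V) :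
    Fintype.card V - k + 1 ≤
      {X : Set V | ConnectedIn A X ∧ ConvexIn A X ∧ X.ncard = k}.ncard := by
  have : Nonempty V := hconn.nonempty
  have hcard : (Set.univ : Set V).ncard = Fintype.card V := by
    rw [Set.ncard_univ, Nat.card_eq_fintype_card]
  have h := hacyc.le_ncard_connectedIn_convexIn (connectedIn_univ.2 hconn) convexIn_univ hk1
    (hcard ▸ hkn)
  simpa only [hcard, Set.subset_univ, true_and] using h
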